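/- arXiv:math/0210143 — 2 statements merged into one kernel-verified Lean document; each statement's English description precedes it below -/
import Mathlib

section
/- Let μ ∈ N and suppose Ric^{ac}_μ = c·I + D for some c ∈ ℝ and D ∈ Der(μ). Then tr((Ric^{ac}_μ)²) = c · tr(Ric_μ) = −(1/4) c ‖μ‖². In particular, if μ ≠ 0 then c = tr((Ric^{ac}_μ)²)/tr(Ric_μ), i.e. the soliton constant equals the square norm of the invariant Ricci tensor divided by the scalar curvature. -/
open scoped BigOperators
open Matrix

noncomputable section

/-- vectors in `ℝ^m`. -/
abbrev Vec (m : ℕ) := Fin m → ℝ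

/-- bilinear-map candidates `ℝ^m × ℝ^m → ℝ^m`. -/
abbrev Bil (m : ℕ) := Vec m → Vec m → Vec m

/-- the `i`-th standard basis vector of `ℝ^m`. -/
def bvec (m : ℕ) (i : Fin m) : Vec m := Pi.single i 1

/-- `μ` is a skew-symmetric bilinear map, i.e. an element of `V = Λ²(ℝ^m)* ⊗ ℝ^m`. -/
def IsSkewBil {m : ℕ} (μ : Bil m) : Prop :=
  (∀ Y, IsLinearMap ℝ fun X => μ X Y) ∧ (∀ X, IsLinearMap ℝ (μ X)) ∧ ∀ X Y, μ X Y = -μ Y X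

/-- the Jacobi identity for `μ`. -/
def IsJacobi {m : ℕ} (μ : Bil m) : Prop :=
  ∀ X Y Z, μ (μ X Y) Z + μ (μ Y Z) X + μ (μ Z X) Y = 0

/-- iterated left multiplications `μ(X (k-1), ⋯ μ(X 0, Y))`. -/
def adPow {m : ℕ} (μ : Bil m) (X : ℕ → Vec m) : ℕ → Vec m → Vec m
  | 0, Y => Y
  | k + 1, Y => μ (X k) (adPow μ X k Y)

/-- nilpotency of the bracket `μ`. -/
def IsNilpotentBil {m : ℕ} (μ : Bil m) : Prop :=
  ∃ k : ℕ, ∀ (X : ℕ → Vec m) (Y : Vec m), adPow μ X k Y = 0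

/-- membership in the variety `N` of nilpotent Lie brackets on `ℝ^m`. -/
def NilBracket {m : ℕ} (μ : Bil m) : Prop :=
  IsSkewBil μ ∧ IsJacobi μ ∧ IsNilpotentBil μ

/-- the `GL_m(ℝ)` action `(g.μ)(X,Y) = g μ(g⁻¹X, g⁻¹Y)` on `V`. -/
def mact {m : ℕ} (g : Matrix (Fin m) (Fin m) ℝ) (μ : Bil m) : Bil m :=
  fun X Y => g.mulVec (μ (g⁻¹.mulVec X) (g⁻¹.mulVec Y))

/-- `‖μ‖²` for the natural inner product on `V`. -/
def normSqV {m : ℕ} (μ : Bil m) : ℝ :=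
  ∑ i, ∑ j, ∑ k, (μ (bvec m i) (bvec m j) k) ^ 2

/-- the Ricci operator of `(N_μ, ⟨·,·⟩)`, as a matrix:
`⟨Ric_μ X, Y⟩ = -(1/2) Σ ⟨μ(X,Xᵢ),Xⱼ⟩⟨μ(Y,Xᵢ),Xⱼ⟩ + (1/4) Σ ⟨μ(Xᵢ,Xⱼ),X⟩⟨μ(Xᵢ,Xⱼ),Y⟩`. -/
def RicM {m : ℕ} (μ : Bil m) : Matrix (Fin m) (Fin m) ℝ :=
  Matrix.of fun x y =>
    -(1/2) * (∑ i, ∑ j, μ (bvec m x) (bvec m i) j * μ (bvec m y) (bvec m i) j)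
    + (1/4) * (∑ i, ∑ j, μ (bvec m i) (bvec m j) x * μ (bvec m i) (bvec m j) y)

/-- `D` is a derivation of the bracket `μ`. -/
def IsDerivation {m : ℕ} (μ : Bil m) (D : Matrix (Fin m) (Fin m) ℝ) : Prop :=
  ∀ X Y, D.mulVec (μ X Y) = μ (D.mulVec X) Y + μ X (D.mulVec Y)

/-- the matrix of `ad_μ X : Y ↦ μ(X,Y)`. -/
def adMat {m : ℕ} (μ : Bil m) (X : Vec m) : Matrix (Fin m) (Fin m) ℝ :=
  Matrix.of fun j i => μ X (bvec m i) j

/-- the moment-map value `M_μ = -4 Σᵢ (ad_μ Xᵢ)ᵗ(ad_μ Xᵢ) + 2 Σᵢ (ad_μ Xᵢ)(ad_μ Xᵢ)ᵗ`. -/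
def Mmat {m : ℕ} (μ : Bil m) : Matrix (Fin m) (Fin m) ℝ :=
  (-4 : ℝ) • (∑ i, (adMat μ (bvec m i))ᵀ * adMat μ (bvec m i))
    + (2 : ℝ) • (∑ i, adMat μ (bvec m i) * (adMat μ (bvec m i))ᵀ)

/-- the 2-form `ω(X,Y) = ⟨X, JY⟩`. -/
def sympForm {m : ℕ} (J : Matrix (Fin m) (Fin m) ℝ) (X Y : Vec m) : ℝ :=
  X ⬝ᵥ J.mulVec Y

/-- closedness of a 2-form `ω` with respect to the bracket `μ`:
`ω(μ(X,Y),Z) + ω(μ(Y,Z),X) + ω(μ(Z,X),Y) = 0`. -/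
def IsClosedForm {m : ℕ} (ω : Vec m → Vec m → ℝ) (μ : Bil m) : Prop :=
  ∀ X Y Z, ω (μ X Y) Z + ω (μ Y Z) X + ω (μ Z X) Y = 0

/-- membership in `Sp(n,ℝ)`: invertible and preserving `ω = ⟨·, J·⟩`. -/
def IsSymplMat {m : ℕ} (J g : Matrix (Fin m) (Fin m) ℝ) : Prop :=
  IsUnit g ∧ ∀ X Y, sympForm J (g.mulVec X) (g.mulVec Y) = sympForm J X Y

/-- membership in `GL(n,ℂ) = {g : gJ = Jg}`. -/
def IsCxMat {m : ℕ} (J g : Matrix (Fin m) (Fin m) ℝ) : Prop :=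
  IsUnit g ∧ g * J = J * g

/-- the anti-complexified Ricci operator `Ric^{ac} = (1/2)(Ric + J Ric J)`. -/
def Ricac {m : ℕ} (J : Matrix (Fin m) (Fin m) ℝ) (μ : Bil m) : Matrix (Fin m) (Fin m) ℝ :=
  (1/2 : ℝ) • (RicM μ + J * RicM μ * J)

/-- the complexified Ricci operator `Ric^{c} = (1/2)(Ric − J Ric J)`. -/
def Ricc {m : ℕ} (J : Matrix (Fin m) (Fin m) ℝ) (μ : Bil m) : Matrix (Fin m) (Fin m) ℝ :=
  (1/2 : ℝ) • (RicM μ - J * RicM μ * J)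

/-!
`Ric^{ac} = ½(Ric - J Ric J⁻¹)` is the `-1`-eigenpart of the involution `X ↦ J X J⁻¹`, which
preserves the trace form; hence `tr (Ric^{ac})² = tr (Ric^{ac} Ric) = c tr Ric + tr (D Ric)`.
For any skew bracket `4 tr (Ric D) = ⟨π(D)μ, μ⟩` with `π(D)μ = Dμ(·,·) - μ(D·,·) - μ(·,D·)`,
which vanishes for a derivation, and `tr Ric = -¼‖μ‖²`.
-/

section SumComm

variable {α β γ δ M : Type*} [Fintype α] [Fintype β] [Fintype γ] [Fintype δ] [AddCommMonoid M]

theorem Finset.sum_comm_pair (f : α → β → γ → M) :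
    ∑ a, ∑ b, ∑ c, f a b c = ∑ b, ∑ c, ∑ a, f a b c := by
  rw [Finset.sum_comm]
  exact Finset.sum_congr rfl fun b _ => Finset.sum_comm

theorem Finset.sum_comm_pairs (f : α → β → γ → δ → M) :
    ∑ a, ∑ b, ∑ c, ∑ d, f a b c d = ∑ c, ∑ d, ∑ a, ∑ b, f a b c d :=
  calc _ = ∑ p : α × β, ∑ q : γ × δ, f p.1 p.2 q.1 q.2 := by simp only [Fintype.sum_prod_type]
    _ = ∑ q : γ × δ, ∑ p : α × β, f p.1 p.2 q.1 q.2 := Finset.sum_comm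
    _ = _ := by simp only [Fintype.sum_prod_type]

end SumComm

section Matrix

variable {ι K : Type*} [Fintype ι] [DecidableEq ι]

theorem Matrix.trace_conj_of_mul_self_eq_neg_one [CommRing K] {J : Matrix ι ι K} (hJ : J * J = -1)
    (X : Matrix ι ι K) : trace (J * X * J) = -trace X := by
  rw [trace_mul_cycle, hJ, neg_one_mul, trace_neg]

theorem Matrix.trace_half_add_conj_mul_self [Field K] [NeZero (2 : K)] {J : Matrix ι ι K}
    (hJ : J * J = -1) (R : Matrix ι ι K) :
    trace (((1/2 : K) • (R + J * R * J)) * ((1/2 : K) • (R + J * R * J)))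
      = trace (((1/2 : K) • (R + J * R * J)) * R) := by
  have hsq : trace ((J * R * J) * (J * R * J)) = trace (R * R) := by
    rw [show (J * R * J) * (J * R * J) = J * (R * (J * J) * R) * J by noncomm_ring, hJ,
      trace_conj_of_mul_self_eq_neg_one hJ, mul_neg_one, neg_mul, trace_neg, neg_neg]
  have hcomm : trace (R * (J * R * J)) = trace ((J * R * J) * R) := trace_mul_comm _ _
  simp only [Matrix.smul_mul, Matrix.mul_smul, Matrix.add_mul, Matrix.mul_add, trace_smul,
    trace_add, smul_eq_mul, hsq, hcomm]
  field_simp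
  ring

end Matrix

namespace IsSkewBil

variable {m : ℕ} {μ : Bil m}

theorem apply_eq_sum_left (hμ : IsSkewBil μ) (X Y : Vec m) :
    μ X Y = ∑ i, X i • μ (bvec m i) Y := by
  conv_lhs => rw [pi_eq_sum_univ' X]
  exact map_sum (IsLinearMap.mk' _ (hμ.1 Y)) _ _ |>.trans
    (Finset.sum_congr rfl fun i _ => (hμ.1 Y).map_smul _ _)

theorem apply_eq_sum_right (hμ : IsSkewBil μ) (X Y : Vec m) :
    μ X Y = ∑ j, Y j • μ X (bvec m j) := by
  conv_lhs => rw [pi_eq_sum_univ' Y]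
  exact map_sum (IsLinearMap.mk' _ (hμ.2.1 X)) _ _ |>.trans
    (Finset.sum_congr rfl fun i _ => (hμ.2.1 X).map_smul _ _)

theorem eq_zero_of_normSqV_eq_zero (hμ : IsSkewBil μ) (h : normSqV μ = 0) : μ = 0 := by
  have hbasis : ∀ i j, μ (bvec m i) (bvec m j) = 0 := by
    simp (disch := intros; positivity) only [normSqV, Finset.sum_eq_zero_iff_of_nonneg,
      Finset.mem_univ, forall_const, pow_eq_zero_iff] at h
    exact fun i j => funext (h i j)
  ext X Y k
  simp [hμ.apply_eq_sum_left X Y, hμ.apply_eq_sum_right _ Y, hbasis]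

theorem four_mul_trace_RicM_mul (hμ : IsSkewBil μ) (D : Matrix (Fin m) (Fin m) ℝ) :
    4 * trace (RicM μ * D) = ∑ i, ∑ j,
      (D *ᵥ μ (bvec m i) (bvec m j) - μ (D *ᵥ bvec m i) (bvec m j)
        - μ (bvec m i) (D *ᵥ bvec m j)) ⬝ᵥ μ (bvec m i) (bvec m j) := by
  set c : Fin m → Fin m → Fin m → ℝ := fun i j k => μ (bvec m i) (bvec m j) k
  have hleft : ∀ i j k, μ (D *ᵥ bvec m i) (bvec m j) k = ∑ p, D p i * c p j k := by
    intro i j k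
    rw [hμ.apply_eq_sum_left, Finset.sum_apply]
    simp [bvec, c]
  have htrace : trace (RicM μ * D)
      = -(1/2) * ∑ x, ∑ y, ∑ i, ∑ j, c x i j * c y i j * D y x
        + (1/4) * ∑ x, ∑ y, ∑ i, ∑ j, c i j x * c i j y * D y x := by
    simp [trace, mul_apply, RicM, c, Finset.sum_add_distrib, Finset.mul_sum, Finset.sum_mul,
      add_mul, mul_assoc]
  have hDμ : ∀ i j k, (D *ᵥ μ (bvec m i) (bvec m j)) k = ∑ p, D k p * c i j p := fun _ _ _ => rfl
  have h1 : ∑ x, ∑ y, ∑ i, ∑ j, c x i j * c y i j * D y x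
      = ∑ i, ∑ j, μ (D *ᵥ bvec m i) (bvec m j) ⬝ᵥ μ (bvec m i) (bvec m j) := by
    simp only [dotProduct, hleft, Finset.sum_mul]
    refine Finset.sum_congr rfl fun i _ => ?_
    rw [Finset.sum_comm_pair]
    ac_rfl
  have h2 : ∑ x, ∑ y, ∑ i, ∑ j, c i j x * c i j y * D y x
      = ∑ i, ∑ j, (D *ᵥ μ (bvec m i) (bvec m j)) ⬝ᵥ μ (bvec m i) (bvec m j) := by
    simp only [dotProduct, hDμ, Finset.sum_mul]
    rw [Finset.sum_comm, Finset.sum_comm_pairs]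
    ac_rfl
  have h3 : ∑ i, ∑ j, μ (bvec m i) (D *ᵥ bvec m j) ⬝ᵥ μ (bvec m i) (bvec m j)
      = ∑ i, ∑ j, μ (D *ᵥ bvec m i) (bvec m j) ⬝ᵥ μ (bvec m i) (bvec m j) := by
    rw [Finset.sum_comm]
    refine Finset.sum_congr rfl fun i _ => Finset.sum_congr rfl fun j _ => ?_
    rw [hμ.2.2 (bvec m j), hμ.2.2 (bvec m j) (bvec m i), neg_dotProduct_neg]
  simp only [sub_dotProduct, Finset.sum_sub_distrib, htrace, h1, h2, h3]
  ring

end IsSkewBil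

theorem trace_RicM {m : ℕ} (μ : Bil m) : trace (RicM μ) = -(1/4) * normSqV μ := by
  simp only [trace, diag, RicM, of_apply, Finset.sum_add_distrib, ← Finset.mul_sum, normSqV, sq]
  rw [Finset.sum_comm_pair (fun x i j => μ (bvec m i) (bvec m j) x * μ (bvec m i) (bvec m j) x)]
  ring

theorem IsDerivation.trace_RicM_mul_eq_zero {m : ℕ} {μ : Bil m} {D : Matrix (Fin m) (Fin m) ℝ}
    (hD : IsDerivation μ D) (hμ : IsSkewBil μ) : trace (RicM μ * D) = 0 := by
  have h := hμ.four_mul_trace_RicM_mul D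
  simp only [hD _ _, add_sub_cancel_left, sub_self, zero_dotProduct, Finset.sum_const_zero] at h
  linarith

theorem soliton_constant_general (n : ℕ)
    (J : Matrix (Fin (2 * n)) (Fin (2 * n)) ℝ) (hJsq : J * J = -1)
    (μ : Bil (2 * n)) (hμ : NilBracket μ)
    (c : ℝ) (D : Matrix (Fin (2 * n)) (Fin (2 * n)) ℝ) (hD : IsDerivation μ D)
    (hsol : Ricac J μ = c • (1 : Matrix (Fin (2 * n)) (Fin (2 * n)) ℝ) + D) :
    Matrix.trace (Ricac J μ * Ricac J μ) = c * Matrix.trace (RicM μ) ∧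
    Matrix.trace (Ricac J μ * Ricac J μ) = -(1/4) * c * normSqV μ ∧
    (μ ≠ 0 → c = Matrix.trace (Ricac J μ * Ricac J μ) / Matrix.trace (RicM μ)) := by
  have hsq : trace (Ricac J μ * Ricac J μ) = c * trace (RicM μ) :=
    calc _ = trace (Ricac J μ * RicM μ) := trace_half_add_conj_mul_self hJsq (RicM μ)
      _ = trace ((c • 1 + D) * RicM μ) := by rw [hsol]
      _ = c * trace (RicM μ) := by
        rw [add_mul, trace_add, trace_mul_comm D, hD.trace_RicM_mul_eq_zero hμ.1]
        simp
  have htr := trace_RicM μ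
  refine ⟨hsq, by rw [hsq, htr]; ring, fun hne => ?_⟩
  have htr0 : trace (RicM μ) ≠ 0 := by
    rw [htr]
    exact mul_ne_zero (by norm_num) (mt hμ.1.eq_zero_of_normSqV_eq_zero hne)
  rw [hsq, mul_div_cancel_right₀ c htr0]

/-- if `Ric^{ac}_μ = cI + D` with `D ∈ Der(μ)` then
`tr((Ric^{ac}_μ)²) = c·tr(Ric_μ) = −(1/4) c ‖μ‖²`, and if `μ ≠ 0` the soliton constant is
`c = tr((Ric^{ac}_μ)²)/tr(Ric_μ)`. -/
theorem soliton_constant (n : ℕ) (hn : 1 ≤ n)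
    (J : Matrix (Fin (2 * n)) (Fin (2 * n)) ℝ) (hJskew : Jᵀ = -J) (hJsq : J * J = -1)
    (μ : Bil (2 * n)) (hμ : NilBracket μ)
    (c : ℝ) (D : Matrix (Fin (2 * n)) (Fin (2 * n)) ℝ) (hD : IsDerivation μ D)
    (hsol : Ricac J μ = c • (1 : Matrix (Fin (2 * n)) (Fin (2 * n)) ℝ) + D) :
    Matrix.trace (Ricac J μ * Ricac J μ) = c * Matrix.trace (RicM μ) ∧
    Matrix.trace (Ricac J μ * Ricac J μ) = -(1/4) * c * normSqV μ ∧
    (μ ≠ 0 → c = Matrix.trace (Ricac J μ * Ricac J μ) / Matrix.trace (RicM μ)) :=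
  soliton_constant_general n J hJsq μ hμ c D hD hsol
end
end

section
/- Let μ, λ ∈ W_h. Then there exists g ∈ GL(2,ℍ) with g.λ = μ (i.e. the hypercomplex nilpotent Lie groups (N_μ, {J₁,J₂,J₃}) and (N_λ, {J₁,J₂,J₃}) are isomorphic) if and only if there exist c ≠ 0 and k ∈ Sp(1)×Sp(1) such that k.(cλ) = μ. (The moduli space of 8-dimensional hypercomplex nilpotent Lie groups up to isomorphism is parameterized by ℙW_h/(Sp(1)×Sp(1)).) -/
open scoped BigOperators
open Matrix

noncomputable section

/-- the first standard quaternionic structure on `ℝ⁴`. -/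
def J1four : Matrix (Fin 4) (Fin 4) ℝ := !![0,-1,0,0; 1,0,0,0; 0,0,0,-1; 0,0,1,0]

/-- the second standard quaternionic structure on `ℝ⁴`. -/
def J2four : Matrix (Fin 4) (Fin 4) ℝ := !![0,0,-1,0; 0,0,0,1; 1,0,0,0; 0,-1,0,0]

/-- the third standard quaternionic structure on `ℝ⁴`. -/
def J3four : Matrix (Fin 4) (Fin 4) ℝ := !![0,0,0,-1; 0,0,-1,0; 0,1,0,0; 1,0,0,0]

/-- block-diagonal extension of a 4×4 matrix to `ℝ⁸ = ℝ⁴ ⊕ ℝ⁴`. -/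
def Joct (A : Matrix (Fin 4) (Fin 4) ℝ) : Matrix (Fin 8) (Fin 8) ℝ :=
  Matrix.reindex finSumFinEquiv finSumFinEquiv (Matrix.fromBlocks A 0 0 A)

/-- `J₁` on `ℝ⁸`. -/
def Q1 : Matrix (Fin 8) (Fin 8) ℝ := Joct J1four
/-- `J₂` on `ℝ⁸`. -/
def Q2 : Matrix (Fin 8) (Fin 8) ℝ := Joct J2four
/-- `J₃` on `ℝ⁸`. -/
def Q3 : Matrix (Fin 8) (Fin 8) ℝ := Joct J3four

/-- membership in the first factor `n₁` of `ℝ⁸ = n₁ ⊕ n₂`. -/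
def inN1 (X : Vec 8) : Prop := ∀ i : Fin 8, 4 ≤ (i : ℕ) → X i = 0

/-- membership in the second factor `n₂` of `ℝ⁸ = n₁ ⊕ n₂`. -/
def inN2 (X : Vec 8) : Prop := ∀ i : Fin 8, (i : ℕ) < 4 → X i = 0

/-- the subspace `W ⊂ V`: skew bilinear maps with values in `n₂` vanishing on `n₂`. -/
def memW (μ : Bil 8) : Prop :=
  IsSkewBil μ ∧ (∀ X Y, inN2 (μ X Y)) ∧ ∀ X Y, inN2 X → μ X Y = 0

/-- integrability of the almost complex structure `J` for the bracket `μ`. -/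
def IsIntegrable {m : ℕ} (J : Matrix (Fin m) (Fin m) ℝ) (μ : Bil m) : Prop :=
  ∀ X Y, μ (J.mulVec X) (J.mulVec Y)
    = μ X Y + J.mulVec (μ (J.mulVec X) Y) + J.mulVec (μ X (J.mulVec Y))

/-- the subspace `W_h ⊂ W` of hypercomplex brackets. -/
def memWh (μ : Bil 8) : Prop :=
  memW μ ∧ IsIntegrable Q1 μ ∧ IsIntegrable Q2 μ ∧ IsIntegrable Q3 μ

/-- membership in `GL(2,ℍ) = {g ∈ GL(8,ℝ) : gJᵢ = Jᵢg}`. -/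
def IsGL2H (g : Matrix (Fin 8) (Fin 8) ℝ) : Prop :=
  IsUnit g ∧ g * Q1 = Q1 * g ∧ g * Q2 = Q2 * g ∧ g * Q3 = Q3 * g

/-- membership in `Sp(2) = GL(2,ℍ) ∩ O(8)`. -/
def IsSp2 (k : Matrix (Fin 8) (Fin 8) ℝ) : Prop := IsGL2H k ∧ kᵀ * k = 1

/-- the quaternionic (invariant) Ricci operator
`Ric^q = (1/4)(Ric − J₁ Ric J₁ − J₂ Ric J₂ − J₃ Ric J₃)`. -/
def Ricq (μ : Bil 8) : Matrix (Fin 8) (Fin 8) ℝ :=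
  (1/4 : ℝ) • (RicM μ - Q1 * RicM μ * Q1 - Q2 * RicM μ * Q2 - Q3 * RicM μ * Q3)


/-! ### Auxiliary material for the proof of `hypercomplex_moduli` -/

section HCaux

local notation "ℍℝ" => Quaternion ℝ

/-- the matrix of the quaternion action on `ℝ⁴` whose image is the commutant of
`{J1four, J2four, J3four}`. -/
def Lq (a : ℍℝ) : Matrix (Fin 4) (Fin 4) ℝ :=
  !![a.re, a.imI, -a.imJ, -a.imK;
     -a.imI, a.re, a.imK, -a.imJ;
     a.imJ, -a.imK, a.re, -a.imI;
     a.imK, a.imJ, a.imI, a.re]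

lemma Lq_one : Lq 1 = 1 := by
  ext i j
  fin_cases i <;> fin_cases j <;> simp [Lq, Matrix.one_apply, Matrix.vecHead, Matrix.vecTail, Quaternion.re_one,
      Quaternion.imI_one, Quaternion.imJ_one, Quaternion.imK_one]

lemma Lq_zero : Lq 0 = 0 := by
  ext i j
  fin_cases i <;> fin_cases j <;> simp [Lq, Matrix.vecHead, Matrix.vecTail, Quaternion.re_zero,
      Quaternion.imI_zero, Quaternion.imJ_zero, Quaternion.imK_zero]

lemma Lq_mul (a b : ℍℝ) : Lq (a * b) = Lq a * Lq b := by
  ext i j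
  fin_cases i <;> fin_cases j <;>
    simp [Lq, Matrix.mul_apply, Fin.sum_univ_four, Quaternion.re_mul, Quaternion.imI_mul,
      Quaternion.imJ_mul, Quaternion.imK_mul] <;> ring

lemma Lq_smul (r : ℝ) (a : ℍℝ) : Lq (r • a) = r • Lq a := by
  ext i j
  fin_cases i <;> fin_cases j <;> simp [Lq, Quaternion.re_smul]

lemma Lq_transpose (a : ℍℝ) : (Lq a)ᵀ = Lq (star a) := by
  ext i j
  fin_cases i <;> fin_cases j <;> simp [Lq]

def qOf (v : Vec 4) : ℍℝ := ⟨v 0, -(v 1), v 2, v 3⟩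
def vOf (q : ℍℝ) : Vec 4 := ![q.re, -q.imI, q.imJ, q.imK]

lemma Lq_mulVec (a : ℍℝ) (v : Vec 4) : (Lq a).mulVec v = vOf (a * qOf v) := by
  funext i
  fin_cases i <;>
    simp [Lq, vOf, Matrix.mulVec, dotProduct, Fin.sum_univ_four,
      Quaternion.re_mul, Quaternion.imI_mul, Quaternion.imJ_mul, Quaternion.imK_mul,
      Matrix.vecHead, Matrix.vecTail] <;> simp [qOf] <;> ring

lemma qOf_eq_zero {v : Vec 4} (h : qOf v = 0) : v = 0 := by
  have h0 := congrArg QuaternionAlgebra.re h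
  have h1 := congrArg QuaternionAlgebra.imI h
  have h2 := congrArg QuaternionAlgebra.imJ h
  have h3 := congrArg QuaternionAlgebra.imK h
  simp [qOf, Quaternion.re_zero, Quaternion.imI_zero, Quaternion.imJ_zero, Quaternion.imK_zero] at h0 h1 h2 h3
  funext i; fin_cases i <;> simp_all

lemma vOf_eq_zero {q : ℍℝ} (h : vOf q = 0) : q = 0 := by
  have h0 := congrFun h 0
  have h1 := congrFun h 1
  have h2 := congrFun h 2
  have h3 := congrFun h 3
  simp [vOf] at h0 h1 h2 h3
  ext <;> simp_all [Quaternion.re_zero, Quaternion.imI_zero, Quaternion.imJ_zero, Quaternion.imK_zero]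

lemma Lq_comm_J1 (a : ℍℝ) : Lq a * J1four = J1four * Lq a := by
  ext i j
  fin_cases i <;> fin_cases j <;>
    simp [Lq, J1four, Matrix.mul_apply, Fin.sum_univ_four, Matrix.vecHead, Matrix.vecTail]

lemma Lq_comm_J2 (a : ℍℝ) : Lq a * J2four = J2four * Lq a := by
  ext i j
  fin_cases i <;> fin_cases j <;>
    simp [Lq, J2four, Matrix.mul_apply, Fin.sum_univ_four, Matrix.vecHead, Matrix.vecTail]

lemma Lq_comm_J3 (a : ℍℝ) : Lq a * J3four = J3four * Lq a := by
  ext i j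
  fin_cases i <;> fin_cases j <;>
    simp [Lq, J3four, Matrix.mul_apply, Fin.sum_univ_four, Matrix.vecHead, Matrix.vecTail]

set_option maxHeartbeats 2000000 in
/-- any matrix commuting with `J1four` and `J2four` is in the image of `Lq`. -/
lemma commutant4 {M : Matrix (Fin 4) (Fin 4) ℝ}
    (h1 : M * J1four = J1four * M) (h2 : M * J2four = J2four * M) :
    M = Lq ⟨M 0 0, M 0 1, -(M 0 2), -(M 0 3)⟩ := by
  have eA00 := congrFun (congrFun h1 0) 0
  have eA01 := congrFun (congrFun h1 0) 1
  have eA02 := congrFun (congrFun h1 0) 2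
  have eA03 := congrFun (congrFun h1 0) 3
  have eA10 := congrFun (congrFun h1 1) 0
  have eA11 := congrFun (congrFun h1 1) 1
  have eA12 := congrFun (congrFun h1 1) 2
  have eA13 := congrFun (congrFun h1 1) 3
  have eA20 := congrFun (congrFun h1 2) 0
  have eA21 := congrFun (congrFun h1 2) 1
  have eA22 := congrFun (congrFun h1 2) 2
  have eA23 := congrFun (congrFun h1 2) 3
  have eA30 := congrFun (congrFun h1 3) 0
  have eA31 := congrFun (congrFun h1 3) 1
  have eA32 := congrFun (congrFun h1 3) 2
  have eA33 := congrFun (congrFun h1 3) 3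
  have eB00 := congrFun (congrFun h2 0) 0
  have eB01 := congrFun (congrFun h2 0) 1
  have eB02 := congrFun (congrFun h2 0) 2
  have eB03 := congrFun (congrFun h2 0) 3
  have eB10 := congrFun (congrFun h2 1) 0
  have eB11 := congrFun (congrFun h2 1) 1
  have eB12 := congrFun (congrFun h2 1) 2
  have eB13 := congrFun (congrFun h2 1) 3
  have eB20 := congrFun (congrFun h2 2) 0
  have eB21 := congrFun (congrFun h2 2) 1
  have eB22 := congrFun (congrFun h2 2) 2
  have eB23 := congrFun (congrFun h2 2) 3
  have eB30 := congrFun (congrFun h2 3) 0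
  have eB31 := congrFun (congrFun h2 3) 1
  have eB32 := congrFun (congrFun h2 3) 2
  have eB33 := congrFun (congrFun h2 3) 3
  simp [Matrix.mul_apply, Fin.sum_univ_four, J1four, J2four, Matrix.cons_val_zero,
    Matrix.cons_val_one, Matrix.head_cons, Matrix.vecHead, Matrix.vecTail, Matrix.cons_val',
    Matrix.empty_val', Matrix.cons_val_fin_one] at eA00 eA01 eA02 eA03 eA10 eA11 eA12 eA13 eA20 eA21 eA22 eA23 eA30 eA31 eA32 eA33 eB00 eB01 eB02 eB03 eB10 eB11 eB12 eB13 eB20 eB21 eB22 eB23 eB30 eB31 eB32 eB33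
  ext i j
  fin_cases i <;> fin_cases j <;> simp [Lq] <;> linarith [eA00, eA01, eA02, eA03, eA10, eA11, eA12, eA13, eA20, eA21, eA22, eA23, eA30, eA31, eA32, eA33, eB00, eB01, eB02, eB03, eB10, eB11, eB12, eB13, eB20, eB21, eB22, eB23, eB30, eB31, eB32, eB33]

abbrev eS : Fin 4 ⊕ Fin 4 ≃ Fin 8 := finSumFinEquiv

/-- 8×8 block matrices. -/
def Dg (A B C D : Matrix (Fin 4) (Fin 4) ℝ) : Matrix (Fin 8) (Fin 8) ℝ :=
  Matrix.reindex eS eS (Matrix.fromBlocks A B C D)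

lemma Dg_mul (A B C D A' B' C' D' : Matrix (Fin 4) (Fin 4) ℝ) :
    Dg A B C D * Dg A' B' C' D'
      = Dg (A*A'+B*C') (A*B'+B*D') (C*A'+D*C') (C*B'+D*D') := by
  simp [Dg, Matrix.reindex_apply, Matrix.submatrix_mul_equiv, Matrix.fromBlocks_multiply]

lemma Dg_inj {A B C D A' B' C' D' : Matrix (Fin 4) (Fin 4) ℝ}
    (h : Dg A B C D = Dg A' B' C' D') : A = A' ∧ B = B' ∧ C = C' ∧ D = D' := by
  have h2 : Matrix.fromBlocks A B C D = Matrix.fromBlocks A' B' C' D' :=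
    (Matrix.reindex eS eS).injective h
  rw [Matrix.fromBlocks_inj] at h2
  exact h2

lemma Dg_one : Dg 1 0 0 1 = 1 := by
  simp [Dg, Matrix.fromBlocks_one, Matrix.reindex_apply, Matrix.submatrix_one_equiv]

lemma Dg_transpose (A B C D : Matrix (Fin 4) (Fin 4) ℝ) :
    (Dg A B C D)ᵀ = Dg Aᵀ Cᵀ Bᵀ Dᵀ := by
  simp [Dg, Matrix.reindex_apply, Matrix.transpose_submatrix, Matrix.fromBlocks_transpose]

lemma Q1_eq : Q1 = Dg J1four 0 0 J1four := rfl
lemma Q2_eq : Q2 = Dg J2four 0 0 J2four := rfl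
lemma Q3_eq : Q3 = Dg J3four 0 0 J3four := rfl

/-- the commutant of `{Q1, Q2}` inside `M₈(ℝ)` consists of quaternionic 2×2 block matrices. -/
lemma commutant8 {M : Matrix (Fin 8) (Fin 8) ℝ}
    (h1 : M * Q1 = Q1 * M) (h2 : M * Q2 = Q2 * M) :
    ∃ a b c d : ℍℝ, M = Dg (Lq a) (Lq b) (Lq c) (Lq d) := by
  obtain ⟨A, B, C, D, hM⟩ : ∃ A B C D, M = Dg A B C D := by
    refine ⟨((Matrix.reindex eS eS).symm M).toBlocks₁₁,
      ((Matrix.reindex eS eS).symm M).toBlocks₁₂,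
      ((Matrix.reindex eS eS).symm M).toBlocks₂₁,
      ((Matrix.reindex eS eS).symm M).toBlocks₂₂, ?_⟩
    rw [Dg, Matrix.fromBlocks_toBlocks]
    exact ((Matrix.reindex eS eS).apply_symm_apply M).symm
  subst hM
  rw [Q1_eq, Dg_mul, Dg_mul] at h1
  rw [Q2_eq, Dg_mul, Dg_mul] at h2
  obtain ⟨e11, e12, e21, e22⟩ := Dg_inj h1
  obtain ⟨f11, f12, f21, f22⟩ := Dg_inj h2
  simp only [Matrix.mul_zero, Matrix.zero_mul, add_zero, zero_add] at e11 e12 e21 e22 f11 f12 f21 f22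
  refine ⟨⟨A 0 0, A 0 1, -(A 0 2), -(A 0 3)⟩, ⟨B 0 0, B 0 1, -(B 0 2), -(B 0 3)⟩,
    ⟨C 0 0, C 0 1, -(C 0 2), -(C 0 3)⟩, ⟨D 0 0, D 0 1, -(D 0 2), -(D 0 3)⟩, ?_⟩
  rw [← commutant4 e11 f11, ← commutant4 e12 f12, ← commutant4 e21 f21, ← commutant4 e22 f22]

def e8 (x y : Vec 4) : Vec 8 := Sum.elim x y ∘ eS.symm
def pr1 (v : Vec 8) : Vec 4 := fun i => v (eS (Sum.inl i))
def pr2 (v : Vec 8) : Vec 4 := fun i => v (eS (Sum.inr i))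

lemma pr1_e8 (x y : Vec 4) : pr1 (e8 x y) = x := by
  funext i; simp [pr1, e8]

lemma pr2_e8 (x y : Vec 4) : pr2 (e8 x y) = y := by
  funext i; simp [pr2, e8]

lemma e8_pr (v : Vec 8) : e8 (pr1 v) (pr2 v) = v := by
  funext i
  simp only [e8, Function.comp]
  rcases h : eS.symm i with j | j
  · show pr1 v j = v i
    simp only [pr1, ← h, Equiv.apply_symm_apply]
  · show pr2 v j = v i
    simp only [pr2, ← h, Equiv.apply_symm_apply]

lemma e8_smul (s : ℝ) (x y : Vec 4) : e8 (s • x) (s • y) = s • e8 x y := by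
  funext i
  simp only [e8, Function.comp, Pi.smul_apply]
  rcases eS.symm i with j | j <;> simp

lemma e8_add (x x' y y' : Vec 4) : e8 (x + x') (y + y') = e8 x y + e8 x' y' := by
  funext i
  simp only [e8, Function.comp, Pi.add_apply]
  rcases eS.symm i with j | j <;> simp

lemma e8_zero : e8 0 0 = 0 := by
  funext i
  simp only [e8, Function.comp]
  rcases eS.symm i with j | j <;> simp

lemma pr2_smul (r : ℝ) (v : Vec 8) : pr2 (r • v) = r • pr2 v := rfl

lemma mulVec_Dg (A B C D : Matrix (Fin 4) (Fin 4) ℝ) (x y : Vec 4) :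
    (Dg A B C D).mulVec (e8 x y) = e8 (A.mulVec x + B.mulVec y) (C.mulVec x + D.mulVec y) := by
  have key : (e8 x y) ∘ (eS.symm).symm = Sum.elim x y := by
    funext j; simp [e8]
  show (Matrix.fromBlocks A B C D).submatrix eS.symm eS.symm *ᵥ (e8 x y) = _
  rw [Matrix.submatrix_mulVec_equiv, key, Matrix.fromBlocks_mulVec]
  rfl

lemma inN2_iff (v : Vec 8) : inN2 v ↔ pr1 v = 0 := by
  constructor
  · intro h; funext i
    refine h _ ?_
    rw [show eS = finSumFinEquiv from rfl, finSumFinEquiv_apply_left]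
    simp [i.isLt]
  · intro h i hi
    have hi4 : (i : ℕ) < 4 := hi
    have : i = eS (Sum.inl ⟨(i : ℕ), hi4⟩) := by
      apply Fin.ext
      rw [show eS = finSumFinEquiv from rfl, finSumFinEquiv_apply_left]
      simp
    rw [this]
    exact congrFun h ⟨(i : ℕ), hi4⟩

lemma inN1_iff (v : Vec 8) : inN1 v ↔ pr2 v = 0 := by
  constructor
  · intro h; funext i
    refine h _ ?_
    rw [show eS = finSumFinEquiv from rfl, finSumFinEquiv_apply_right]
    simp
  · intro h i hi
    have hi4 : 4 ≤ (i : ℕ) := hi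
    have hlt : (i : ℕ) - 4 < 4 := by omega
    have : i = eS (Sum.inr ⟨(i : ℕ) - 4, hlt⟩) := by
      apply Fin.ext
      rw [show eS = finSumFinEquiv from rfl, finSumFinEquiv_apply_right]
      simp; omega
    rw [this]
    exact congrFun h ⟨(i : ℕ) - 4, hlt⟩

/-- a bracket in `W` only depends on the `n₁`-components of its arguments. -/
lemma memW_pr {ν : Bil 8} (hW : memW ν) (u v : Vec 8) :
    ν u v = ν (e8 (pr1 u) 0) (e8 (pr1 v) 0) := by
  have hu : u = e8 (pr1 u) 0 + e8 0 (pr2 u) := by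
    rw [← e8_add, add_zero, zero_add, e8_pr]
  have hv : v = e8 (pr1 v) 0 + e8 0 (pr2 v) := by
    rw [← e8_add, add_zero, zero_add, e8_pr]
  have h2 : ∀ y w, ν (e8 0 y) w = 0 := by
    intro y w
    exact hW.2.2 _ _ ((inN2_iff _).mpr (pr1_e8 0 y))
  calc ν u v = ν (e8 (pr1 u) 0 + e8 0 (pr2 u)) v := by rw [← hu]
    _ = ν (e8 (pr1 u) 0) v := by
        rw [(hW.1.1 v).map_add, h2, add_zero]
    _ = ν (e8 (pr1 u) 0) (e8 (pr1 v) 0 + e8 0 (pr2 v)) := by rw [← hv]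
    _ = ν (e8 (pr1 u) 0) (e8 (pr1 v) 0) := by
        rw [(hW.1.2.1 _).map_add]
        have : ν (e8 (pr1 u) 0) (e8 0 (pr2 v)) = 0 := by
          rw [hW.1.2.2, h2, neg_zero]
        rw [this, add_zero]

/-- values of a bracket in `W` are concentrated in `n₂`. -/
lemma memW_val {ν : Bil 8} (hW : memW ν) (u v : Vec 8) :
    ν u v = e8 0 (pr2 (ν u v)) := by
  have h := (inN2_iff (ν u v)).mp (hW.2.1 u v)
  conv_lhs => rw [← e8_pr (ν u v), h]

lemma mact_mul (g₁ g₂ : Matrix (Fin 8) (Fin 8) ℝ) (ν : Bil 8) :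
    mact (g₁ * g₂) ν = mact g₁ (mact g₂ ν) := by
  funext X Y
  simp only [mact, Matrix.mulVec_mulVec, Matrix.mul_inv_rev]

lemma comm_of_inv {g Q h : Matrix (Fin 8) (Fin 8) ℝ} (hg : g * Q = Q * g)
    (hhg : h * g = 1) (hgh : g * h = 1) : h * Q = Q * h := by
  calc h * Q = h * Q * (g * h) := by rw [hgh, mul_one]
    _ = h * (Q * g) * h := by simp only [mul_assoc]
    _ = h * (g * Q) * h := by rw [hg]
    _ = (h * g) * (Q * h) := by simp only [mul_assoc]
    _ = Q * h := by rw [hhg, one_mul]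

lemma Lq_inj {a b : Quaternion ℝ} (h : Lq a = Lq b) : a = b := by
  have h00 := congrFun (congrFun h 0) 0
  have h01 := congrFun (congrFun h 0) 1
  have h02 := congrFun (congrFun h 0) 2
  have h03 := congrFun (congrFun h 0) 3
  simp [Lq] at h00 h01 h02 h03
  ext <;> simp_all

lemma mact_smul_one {lam : Bil 8} (hlam : IsSkewBil lam) {c : ℝ} (hc : c ≠ 0) :
    mact (c⁻¹ • (1 : Matrix (Fin 8) (Fin 8) ℝ)) lam = c • lam := by
  have hinv : (c⁻¹ • (1 : Matrix (Fin 8) (Fin 8) ℝ))⁻¹ = c • 1 := by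
    apply Matrix.inv_eq_right_inv
    rw [smul_mul_assoc, mul_smul_comm, smul_smul, one_mul, inv_mul_cancel₀ hc, one_smul]
  funext X Y
  show (c⁻¹ • (1 : Matrix (Fin 8) (Fin 8) ℝ)) *ᵥ
      (lam ((c⁻¹ • (1:Matrix (Fin 8) (Fin 8) ℝ))⁻¹ *ᵥ X) ((c⁻¹ • (1:Matrix (Fin 8) (Fin 8) ℝ))⁻¹ *ᵥ Y)) = (c • lam) X Y
  rw [hinv, Matrix.smul_mulVec, Matrix.one_mulVec, Matrix.smul_mulVec,
    Matrix.one_mulVec, Matrix.smul_mulVec, Matrix.one_mulVec]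
  rw [(hlam.1 (c • Y)).map_smul, (hlam.2.1 X).map_smul]
  show c⁻¹ • c • c • lam X Y = c • lam X Y
  rw [smul_smul, smul_smul, inv_mul_cancel₀ hc, one_mul]

end HCaux

/-- two hypercomplex structures `μ, λ ∈ W_h` are isomorphic (i.e. lie in the same
`GL(2,ℍ)`-orbit) iff `μ = k.(cλ)` for some `c ≠ 0` and `k ∈ Sp(1)×Sp(1)`. -/
theorem hypercomplex_moduli (μ lam : Bil 8) (hμ : memWh μ) (hlam : memWh lam) :
    (∃ g : Matrix (Fin 8) (Fin 8) ℝ, IsGL2H g ∧ mact g lam = μ)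
      ↔ ∃ c : ℝ, c ≠ 0 ∧ ∃ k : Matrix (Fin 8) (Fin 8) ℝ, IsSp2 k ∧
          (∀ X, inN1 X → inN1 (k.mulVec X)) ∧ (∀ X, inN2 X → inN2 (k.mulVec X)) ∧
          mact k (c • lam) = μ := by
  have hμW : memW μ := hμ.1
  have hlamW : memW lam := hlam.1
  constructor
  · rintro ⟨g, ⟨hgU, hg1, hg2, hg3⟩, hgact⟩
    have hdet : IsUnit g.det := (Matrix.isUnit_iff_isUnit_det g).mp hgU
    have hhg : g⁻¹ * g = 1 := Matrix.nonsing_inv_mul g hdet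
    have hgh : g * g⁻¹ = 1 := Matrix.mul_nonsing_inv g hdet
    have key : ∀ X Y, g⁻¹.mulVec (μ X Y) = lam (g⁻¹.mulVec X) (g⁻¹.mulVec Y) := by
      intro X Y
      rw [← hgact]
      show g⁻¹ *ᵥ (g *ᵥ lam (g⁻¹ *ᵥ X) (g⁻¹ *ᵥ Y)) = _
      rw [Matrix.mulVec_mulVec, hhg, Matrix.one_mulVec]
    by_cases hμ0 : ∀ X Y, μ X Y = 0
    · have hlam0 : ∀ X Y, lam X Y = 0 := by
        intro X Y
        have hk := key (g *ᵥ X) (g *ᵥ Y)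
        rw [hμ0] at hk
        simpa [Matrix.mulVec_mulVec, hhg, Matrix.one_mulVec, Matrix.mulVec_zero] using hk.symm
      refine ⟨1, one_ne_zero, 1, ⟨⟨isUnit_one, by simp, by simp, by simp⟩, by simp⟩,
        fun X hX => by simpa [Matrix.one_mulVec] using hX,
        fun X hX => by simpa [Matrix.one_mulVec] using hX, ?_⟩
      have hi1 : (1 : Matrix (Fin 8) (Fin 8) ℝ)⁻¹ = 1 := Matrix.inv_eq_right_inv (one_mul 1)
      funext X Y
      show (1 : Matrix (Fin 8) (Fin 8) ℝ) *ᵥ (((1:ℝ) • lam) _ _) = μ X Y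
      rw [Matrix.one_mulVec, one_smul, hμ0 X Y, hlam0]
    · push_neg at hμ0
      obtain ⟨X₀, Y₀, hw⟩ := hμ0
      have hh1 : g⁻¹ * Q1 = Q1 * g⁻¹ := comm_of_inv hg1 hhg hgh
      have hh2 : g⁻¹ * Q2 = Q2 * g⁻¹ := comm_of_inv hg2 hhg hgh
      obtain ⟨a, b, c0, d, hhD⟩ := commutant8 hh1 hh2
      obtain ⟨a', b', c', d', hgD⟩ := commutant8 hg1 hg2
      -- the upper-right block of g⁻¹ kills the derived algebra, hence vanishes
      have hb : b = 0 := by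
        have hk := key X₀ Y₀
        have hval := memW_val hμW X₀ Y₀
        rw [hval, hhD, mulVec_Dg] at hk
        have hpr := congrArg pr1 hk
        rw [pr1_e8, (inN2_iff _).mp (hlamW.2.1 _ _), Matrix.mulVec_zero, zero_add] at hpr
        rw [Lq_mulVec] at hpr
        have hq := vOf_eq_zero hpr
        rcases mul_eq_zero.mp hq with hb0 | hq0
        · exact hb0
        · exfalso
          apply hw
          have h2 : pr2 (μ X₀ Y₀) = 0 := qOf_eq_zero hq0
          rw [hval, h2, e8_zero]
      subst hb
      -- quaternion equations coming from `g⁻¹ * g = 1`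
      have hhg' : g⁻¹ * g = 1 := hhg
      rw [hhD, hgD, Dg_mul, Lq_zero,
        show (1 : Matrix (Fin 8) (Fin 8) ℝ) = Dg 1 0 0 1 from Dg_one.symm] at hhg'
      obtain ⟨q11, q12, q21, q22⟩ := Dg_inj hhg'
      simp only [Matrix.zero_mul, Matrix.mul_zero, add_zero, zero_add] at q11 q12 q21 q22
      have ha1 : a * a' = 1 := Lq_inj (by rw [Lq_mul, q11, Lq_one])
      have ha : a ≠ 0 := left_ne_zero_of_mul_eq_one ha1
      have hb' : b' = 0 := by
        have : a * b' = 0 := Lq_inj (by rw [Lq_mul, q12, Lq_zero])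
        rcases mul_eq_zero.mp this with h | h
        · exact absurd h ha
        · exact h
      rw [hb', Lq_zero, Matrix.mul_zero, zero_add] at q22
      have hd1 : d * d' = 1 := Lq_inj (by rw [Lq_mul, q22, Lq_one])
      have hd : d ≠ 0 := left_ne_zero_of_mul_eq_one hd1
      -- polar decompositions a = s • p, d = t • q with p, q unit quaternions
      have hna : 0 < Quaternion.normSq a :=
        lt_of_le_of_ne (Quaternion.normSq_nonneg) (Ne.symm (Quaternion.normSq_ne_zero.mpr ha))
      have hnd : 0 < Quaternion.normSq d :=
        lt_of_le_of_ne (Quaternion.normSq_nonneg) (Ne.symm (Quaternion.normSq_ne_zero.mpr hd))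
      set s := Real.sqrt (Quaternion.normSq a) with hsdef
      set t := Real.sqrt (Quaternion.normSq d) with htdef
      have hs0 : 0 < s := Real.sqrt_pos.mpr hna
      have ht0 : 0 < t := Real.sqrt_pos.mpr hnd
      have hss : s * s = Quaternion.normSq a := Real.mul_self_sqrt (le_of_lt hna)
      have htt : t * t = Quaternion.normSq d := Real.mul_self_sqrt (le_of_lt hnd)
      set p : Quaternion ℝ := s⁻¹ • a with hpdef
      set qq : Quaternion ℝ := t⁻¹ • d with hqdef
      have hpn : Quaternion.normSq p = 1 := by
        rw [hpdef, Quaternion.normSq_smul, sq, ← hss]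
        field_simp
      have hqn : Quaternion.normSq qq = 1 := by
        rw [hqdef, Quaternion.normSq_smul, sq, ← htt]
        field_simp
      have hps : p * star p = 1 := by rw [Quaternion.self_mul_star, hpn, Quaternion.coe_one]
      have hsp : star p * p = 1 := by rw [Quaternion.star_mul_self, hpn, Quaternion.coe_one]
      have hqs : qq * star qq = 1 := by rw [Quaternion.self_mul_star, hqn, Quaternion.coe_one]
      have hsq : star qq * qq = 1 := by rw [Quaternion.star_mul_self, hqn, Quaternion.coe_one]
      have hap : a = s • p := by
        rw [hpdef, smul_smul, mul_inv_cancel₀ hs0.ne', one_smul]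
      have hdq : d = t • qq := by
        rw [hqdef, smul_smul, mul_inv_cancel₀ ht0.ne', one_smul]
      -- the Sp(1)×Sp(1) element
      set k : Matrix (Fin 8) (Fin 8) ℝ := Dg (Lq (star p)) 0 0 (Lq (star qq)) with hkdef
      have hkT : kᵀ = Dg (Lq p) 0 0 (Lq qq) := by
        rw [hkdef, Dg_transpose, Lq_transpose, Lq_transpose, star_star, star_star,
          Matrix.transpose_zero]
      have hkkT : k * kᵀ = 1 := by
        rw [hkT, hkdef, Dg_mul]
        simp only [Matrix.mul_zero, Matrix.zero_mul, add_zero, zero_add]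
        rw [← Lq_mul, ← Lq_mul, hsp, hsq, Lq_one, Dg_one]
      have hkTk : kᵀ * k = 1 := by
        rw [hkT, hkdef, Dg_mul]
        simp only [Matrix.mul_zero, Matrix.zero_mul, add_zero, zero_add]
        rw [← Lq_mul, ← Lq_mul, hps, hqs, Lq_one, Dg_one]
      have hkinv : k⁻¹ = kᵀ := Matrix.inv_eq_right_inv hkkT
      -- action of g⁻¹ on vectors
      have hHv : ∀ Z : Vec 8, g⁻¹ *ᵥ Z
          = e8 ((Lq a).mulVec (pr1 Z)) ((Lq c0).mulVec (pr1 Z) + (Lq d).mulVec (pr2 Z)) := by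
        intro Z
        conv_lhs => rw [← e8_pr Z]
        rw [hhD, mulVec_Dg, Lq_zero, Matrix.zero_mulVec, add_zero]
      -- the main structural identity
      have key2 : ∀ X Y : Vec 8, e8 0 ((Lq d).mulVec (pr2 (μ X Y)))
          = lam (e8 ((Lq a).mulVec (pr1 X)) 0) (e8 ((Lq a).mulVec (pr1 Y)) 0) := by
        intro X Y
        have hk := key X Y
        have hlhs : g⁻¹ *ᵥ (μ X Y) = e8 0 ((Lq d).mulVec (pr2 (μ X Y))) := by
          rw [hHv (μ X Y), (inN2_iff (μ X Y)).mp (hμW.2.1 X Y), Matrix.mulVec_zero,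
            Matrix.mulVec_zero, zero_add]
        have hrhs : lam (g⁻¹ *ᵥ X) (g⁻¹ *ᵥ Y)
            = lam (e8 ((Lq a).mulVec (pr1 X)) 0) (e8 ((Lq a).mulVec (pr1 Y)) 0) := by
          rw [memW_pr hlamW, hHv X, hHv Y, pr1_e8, pr1_e8]
        rw [hlhs, hrhs] at hk
        exact hk
      refine ⟨s * s / t, by positivity, k, ⟨⟨?_, ?_, ?_, ?_⟩, hkTk⟩, ?_, ?_, ?_⟩
      · exact ⟨⟨k, kᵀ, hkkT, hkTk⟩, rfl⟩
      · rw [hkdef, Q1_eq, Dg_mul, Dg_mul]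
        simp only [Matrix.mul_zero, Matrix.zero_mul, add_zero, zero_add, Lq_comm_J1]
      · rw [hkdef, Q2_eq, Dg_mul, Dg_mul]
        simp only [Matrix.mul_zero, Matrix.zero_mul, add_zero, zero_add, Lq_comm_J2]
      · rw [hkdef, Q3_eq, Dg_mul, Dg_mul]
        simp only [Matrix.mul_zero, Matrix.zero_mul, add_zero, zero_add, Lq_comm_J3]
      · -- k preserves n₁
        intro X hX
        rw [inN1_iff] at hX ⊢
        conv_lhs => rw [← e8_pr X, hX, hkdef, mulVec_Dg]
        simp [Matrix.mulVec_zero, Matrix.zero_mulVec, pr2_e8]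
      · -- k preserves n₂
        intro X hX
        rw [inN2_iff] at hX ⊢
        conv_lhs => rw [← e8_pr X, hX, hkdef, mulVec_Dg]
        simp [Matrix.mulVec_zero, Matrix.zero_mulVec, pr1_e8]
      · -- the action identity
        funext X Y
        show k *ᵥ (((s * s / t) • lam) (k⁻¹ *ᵥ X) (k⁻¹ *ᵥ Y)) = μ X Y
        have hkTv : ∀ Z : Vec 8, kᵀ *ᵥ Z = e8 ((Lq p).mulVec (pr1 Z)) ((Lq qq).mulVec (pr2 Z)) := by
          intro Z
          conv_lhs => rw [← e8_pr Z]
          rw [hkT, mulVec_Dg, Matrix.zero_mulVec, Matrix.zero_mulVec, add_zero, zero_add]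
        rw [hkinv]
        have hL : ((s * s / t) • lam) (kᵀ *ᵥ X) (kᵀ *ᵥ Y)
            = (s * s / t) • lam (e8 ((Lq p).mulVec (pr1 X)) 0) (e8 ((Lq p).mulVec (pr1 Y)) 0) := by
          show (s * s / t) • lam (kᵀ *ᵥ X) (kᵀ *ᵥ Y) = _
          rw [hkTv, hkTv, memW_pr hlamW, pr1_e8, pr1_e8]
        rw [hL]
        -- use key2 at the rescaled points
        have hsc : ∀ Z : Vec 8,
            (Lq a).mulVec (pr1 (e8 (s⁻¹ • pr1 Z) 0)) = (Lq p).mulVec (pr1 Z) := by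
          intro Z
          rw [pr1_e8, hap, Lq_smul, Matrix.mulVec_smul, Matrix.smul_mulVec,
            smul_smul, inv_mul_cancel₀ hs0.ne', one_smul]
        have hk2 := key2 (e8 (s⁻¹ • pr1 X) 0) (e8 (s⁻¹ • pr1 Y) 0)
        rw [hsc X, hsc Y] at hk2
        rw [← hk2]
        -- compute μ at the rescaled points
        have hmusc : μ (e8 (s⁻¹ • pr1 X) 0) (e8 (s⁻¹ • pr1 Y) 0) = s⁻¹ • s⁻¹ • μ X Y := by
          have h1 : e8 (s⁻¹ • pr1 X) (0 : Vec 4) = s⁻¹ • e8 (pr1 X) 0 := by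
            rw [← e8_smul, smul_zero]
          have h2 : e8 (s⁻¹ • pr1 Y) (0 : Vec 4) = s⁻¹ • e8 (pr1 Y) 0 := by
            rw [← e8_smul, smul_zero]
          rw [h1, h2, (hμW.1.1 _).map_smul, (hμW.1.2.1 _).map_smul, ← memW_pr hμW]
        rw [hmusc]
        -- now everything is explicit
        have hstep : (Lq d).mulVec (pr2 (s⁻¹ • s⁻¹ • μ X Y))
            = (s⁻¹ * s⁻¹ * t) • (Lq qq).mulVec (pr2 (μ X Y)) := by
          rw [pr2_smul, pr2_smul, Matrix.mulVec_smul, Matrix.mulVec_smul, hdq, Lq_smul,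
            Matrix.smul_mulVec, smul_smul, smul_smul]
        rw [hstep]
        have hke : k *ᵥ e8 0 ((s⁻¹ * s⁻¹ * t) • (Lq qq).mulVec (pr2 (μ X Y)))
            = e8 0 ((s⁻¹ * s⁻¹ * t) • ((Lq (star qq)).mulVec ((Lq qq).mulVec (pr2 (μ X Y))))) := by
          rw [hkdef, mulVec_Dg]
          simp [Matrix.mulVec_zero, Matrix.zero_mulVec, Matrix.mulVec_smul]
        rw [Matrix.mulVec_smul, hke]
        rw [Matrix.mulVec_mulVec, ← Lq_mul, hsq, Lq_one, Matrix.one_mulVec]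
        have hmu2 : μ X Y = e8 0 (pr2 (μ X Y)) := memW_val hμW X Y
        have hcoef : s * s / t * (s⁻¹ * s⁻¹ * t) = 1 := by
          field_simp
        rw [show e8 (0 : Vec 4) ((s⁻¹ * s⁻¹ * t) • pr2 (μ X Y))
            = (s⁻¹ * s⁻¹ * t) • e8 0 (pr2 (μ X Y)) by rw [← e8_smul, smul_zero],
          smul_smul, hcoef, one_smul, ← hmu2]
  · rintro ⟨c, hc, k, ⟨⟨hkU, hk1, hk2, hk3⟩, hkO⟩, -, -, hmact⟩
    have hsU : IsUnit (c⁻¹ • (1 : Matrix (Fin 8) (Fin 8) ℝ)) :=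
      ⟨⟨c⁻¹ • 1, c • 1,
        by rw [smul_mul_assoc, mul_smul_comm, smul_smul, one_mul, inv_mul_cancel₀ hc, one_smul],
        by rw [smul_mul_assoc, mul_smul_comm, smul_smul, one_mul, mul_inv_cancel₀ hc, one_smul]⟩,
        rfl⟩
    have hscomm : ∀ Q : Matrix (Fin 8) (Fin 8) ℝ,
        (c⁻¹ • (1 : Matrix (Fin 8) (Fin 8) ℝ)) * Q = Q * (c⁻¹ • 1) := by
      intro Q
      rw [smul_mul_assoc, mul_smul_comm, one_mul, mul_one]
    have hcomm : ∀ Q : Matrix (Fin 8) (Fin 8) ℝ, k * Q = Q * k →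
        k * (c⁻¹ • 1) * Q = Q * (k * (c⁻¹ • 1)) := by
      intro Q hQ
      calc k * (c⁻¹ • 1) * Q = k * ((c⁻¹ • 1) * Q) := by rw [mul_assoc]
        _ = k * (Q * (c⁻¹ • 1)) := by rw [hscomm]
        _ = (k * Q) * (c⁻¹ • 1) := by rw [mul_assoc]
        _ = (Q * k) * (c⁻¹ • 1) := by rw [hQ]
        _ = Q * (k * (c⁻¹ • 1)) := by rw [mul_assoc]
    refine ⟨k * (c⁻¹ • 1), ⟨hkU.mul hsU, hcomm Q1 hk1, hcomm Q2 hk2, hcomm Q3 hk3⟩, ?_⟩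
    rw [mact_mul, mact_smul_one hlamW.1 hc, hmact]
end
end
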